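/- arXiv:2403.05461 — 4 statements merged into one kernel-verified Lean document; each statement's English description precedes it below -/
import Mathlib

section
/- Let X be a real n×k matrix of rank k, J = diag(1_p, −1_q) with p + q = k, and ρ > 0. Let P = ρ X J X^T have skinny spectral decomposition P = U Λ U^T, where U ∈ ℝ^{n×k} has orthonormal columns (U^T U = I_k) and Λ ∈ ℝ^{k×k} is an invertible diagonal matrix of the nonzero eigenvalues of P. If W_X is any k×k orthogonal matrix satisfying U Λ^{-1} W_X = ρ^{-1} X (X^T X)^{-1} J (X^T X)^{-1/2}, then U W_X = X (X^T X)^{-1/2}. -/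
/-!
Multiply the relation `U Λ⁻¹ W_X = ρ⁻¹ X (XᵀX)⁻¹ J S⁻¹` on the left by
`P = U Λ Uᵀ = ρ X J Xᵀ`. Since `Uᵀ U = I`, the left side becomes `U W_X`; since `XᵀX` is
invertible (full column rank) and `J² = I`, the right side becomes `X S⁻¹`.
-/

open Matrix

namespace Matrix

variable {l m n K R : Type*} [Fintype m] [Fintype n] [DecidableEq n]

theorem diagonal_mul_self_eq_one [Semiring R] {d : n → R} (hd : ∀ i, d i * d i = 1) :
    diagonal d * diagonal d = 1 := by
  rw [diagonal_mul_diagonal, ← diagonal_one]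
  exact congrArg diagonal (funext hd)

theorem isUnit_of_rank_eq_card [Field K] {A : Matrix n n K} (h : A.rank = Fintype.card n) :
    IsUnit A := by
  rw [← mulVec_surjective_iff_isUnit, ← coe_mulVecLin, ← LinearMap.range_eq_top]
  exact Submodule.eq_top_of_finrank_eq (by rw [Module.finrank_pi]; exact h)

theorem isUnit_det_transpose_mul_self_of_rank_eq
    [Field K] [LinearOrder K] [IsStrictOrderedRing K] {A : Matrix m n K}
    (h : A.rank = Fintype.card n) : IsUnit (Aᵀ * A).det :=
  (isUnit_iff_isUnit_det _).mp (isUnit_of_rank_eq_card (by rw [rank_transpose_mul_self, h]))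

theorem mul_mul_transpose_mul_mul_nonsing_inv_mul [CommRing R] [Fintype l]
    {U : Matrix m n R} {Λ : Matrix n n R} (hU : Uᵀ * U = 1) (hΛ : IsUnit Λ.det)
    (W : Matrix n l R) :
    U * Λ * Uᵀ * (U * Λ⁻¹ * W) = U * W := by
  calc U * Λ * Uᵀ * (U * Λ⁻¹ * W) = U * Λ * (Uᵀ * U) * Λ⁻¹ * W := by
        simp only [Matrix.mul_assoc]
    _ = U * W := by
      rw [hU, Matrix.mul_one, Matrix.mul_assoc U, mul_nonsing_inv Λ hΛ, Matrix.mul_one]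

theorem mul_mul_transpose_mul_gram_inv_mul [CommRing R] [Fintype l]
    {X : Matrix m n R} {J : Matrix n n R} (hJ : J * J = 1) (hX : IsUnit (Xᵀ * X).det)
    (T : Matrix n l R) :
    X * J * Xᵀ * (X * (Xᵀ * X)⁻¹ * J * T) = X * T := by
  calc X * J * Xᵀ * (X * (Xᵀ * X)⁻¹ * J * T)
        = X * J * ((Xᵀ * X) * (Xᵀ * X)⁻¹) * J * T := by
        simp only [Matrix.mul_assoc]
    _ = X * T := by
      rw [mul_nonsing_inv _ hX, Matrix.mul_one, Matrix.mul_assoc X J J, hJ, Matrix.mul_one]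

end Matrix

theorem top_eigvec_orient_eq_whitened_general
    (n k p : ℕ)
    (X : Matrix (Fin n) (Fin k) ℝ) (hX : X.rank = k)
    (ρ : ℝ) (hρ : 0 < ρ)
    (S : Matrix (Fin k) (Fin k) ℝ)
    (U : Matrix (Fin n) (Fin k) ℝ) (dΛ : Fin k → ℝ)
    (hU : Uᵀ * U = 1) (hΛinv : ∀ i, dΛ i ≠ 0)
    (hP : ρ • (X * Matrix.diagonal (fun i : Fin k => if (i : ℕ) < p then (1 : ℝ) else -1) * Xᵀ)
        = U * Matrix.diagonal dΛ * Uᵀ)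
    (WX : Matrix (Fin k) (Fin k) ℝ)
    (hWX : U * (Matrix.diagonal dΛ)⁻¹ * WX
        = ρ⁻¹ • (X * (Xᵀ * X)⁻¹
            * Matrix.diagonal (fun i : Fin k => if (i : ℕ) < p then (1 : ℝ) else -1) * S⁻¹)) :
    U * WX = X * S⁻¹ := by
  set J : Matrix (Fin k) (Fin k) ℝ :=
    diagonal (fun i : Fin k => if (i : ℕ) < p then (1 : ℝ) else -1)
  have hJ : J * J = 1 := diagonal_mul_self_eq_one fun i => by split_ifs <;> norm_num
  have hΛ : IsUnit (diagonal dΛ).det := by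
    rw [det_diagonal]
    exact (Finset.prod_ne_zero_iff.2 fun i _ => hΛinv i).isUnit
  have hXtX : IsUnit (Xᵀ * X).det :=
    isUnit_det_transpose_mul_self_of_rank_eq (by rw [hX, Fintype.card_fin])
  calc U * WX = U * diagonal dΛ * Uᵀ * (U * (diagonal dΛ)⁻¹ * WX) :=
        (mul_mul_transpose_mul_mul_nonsing_inv_mul hU hΛ WX).symm
    _ = ρ • (X * J * Xᵀ) * ρ⁻¹ • (X * (Xᵀ * X)⁻¹ * J * S⁻¹) := by rw [hP, hWX]
    _ = X * S⁻¹ := by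
      rw [Matrix.smul_mul, Matrix.mul_smul, smul_smul, mul_inv_cancel₀ hρ.ne', one_smul,
        mul_mul_transpose_mul_gram_inv_mul hJ hXtX]

/-- Let `X` be a real `n × k` matrix of rank `k`, `J = diag(1_p, −1_q)` with
`p + q = k`, and `ρ > 0`.  Let `P = ρ X J Xᵀ` have a skinny spectral decomposition
`P = U Λ Uᵀ` with `Uᵀ U = I_k` and `Λ` invertible diagonal.  Let `S` be the unique
positive definite square root of `Xᵀ X` (so `(XᵀX)^{-1/2} = S⁻¹`).  If `W_X` is any `k × k`
orthogonal matrix satisfying `U Λ⁻¹ W_X = ρ⁻¹ X (XᵀX)⁻¹ J S⁻¹`, then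
`U W_X = X S⁻¹`. -/
theorem top_eigvec_orient_eq_whitened
    (n k p q : ℕ) (hpq : p + q = k)
    (X : Matrix (Fin n) (Fin k) ℝ) (hX : X.rank = k)
    (ρ : ℝ) (hρ : 0 < ρ)
    (S : Matrix (Fin k) (Fin k) ℝ) (hS : S.PosDef) (hSsq : S * S = Xᵀ * X)
    (U : Matrix (Fin n) (Fin k) ℝ) (dΛ : Fin k → ℝ)
    (hU : Uᵀ * U = 1) (hΛinv : ∀ i, dΛ i ≠ 0)
    (hP : ρ • (X * Matrix.diagonal (fun i : Fin k => if (i : ℕ) < p then (1 : ℝ) else -1) * Xᵀ)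
        = U * Matrix.diagonal dΛ * Uᵀ)
    (WX : Matrix (Fin k) (Fin k) ℝ)
    (hWXorth : WX * WXᵀ = 1 ∧ WXᵀ * WX = 1)
    (hWX : U * (Matrix.diagonal dΛ)⁻¹ * WX
        = ρ⁻¹ • (X * (Xᵀ * X)⁻¹
            * Matrix.diagonal (fun i : Fin k => if (i : ℕ) < p then (1 : ℝ) else -1) * S⁻¹)) :
    U * WX = X * S⁻¹ :=
  top_eigvec_orient_eq_whitened_general n k p X hX ρ hρ S U dΛ hU hΛinv hP WX hWX
end

section
/- Let U and Û be real n×k matrices with orthonormal columns (U^T U = Û^T Û = I_k), and let W_U ∈ O(k) be the orthogonal polar factor of U^T Û, i.e., the orthogonal matrix minimizing ‖U^T Û − W‖_F over W ∈ O(k). Then ‖U^T Û − W_U‖_op ≤ ‖Û Û^T − U U^T‖_op^2, where ‖·‖_op denotes the spectral (operator) norm. -/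
/-!
Put `M = Uᵀ Û` and `C = Mᵀ W_U`. Frobenius minimality of `W_U` says that `Q ↦ tr (C Q)` is
maximal at `Q = 1` on the orthogonal group. Testing this against Householder reflections and
against products of two of them (plane rotations) shows that `C` is symmetric positive
semidefinite, so `M = W_U C` is a polar decomposition and `‖M - W_U‖ = ‖1 - C‖`. On the other
hand `1 - C² = 1 - Mᵀ M = Dᵀ D` with `D = (Û Ûᵀ - U Uᵀ) Û`, so each eigenvalue `μ ≥ 0` of `C`
satisfies `0 ≤ 1 - μ² ≤ ‖D‖²`, and then `|1 - μ| ≤ 1 - μ² ≤ ‖Û Ûᵀ - U Uᵀ‖²`.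
-/

open Matrix

/-- The spectral (ℓ2 → ℓ2 operator) norm of a real matrix, i.e. its largest singular value. -/
noncomputable def opNorm {a b : ℕ} (M : Matrix (Fin a) (Fin b) ℝ) : ℝ :=
  ‖LinearMap.toContinuousLinearMap (Matrix.toEuclideanLin M)‖

/-- Squared Frobenius norm of a matrix. -/
def frobSq {a b : ℕ} (M : Matrix (Fin a) (Fin b) ℝ) : ℝ :=
  ∑ i : Fin a, ∑ j : Fin b, (M i j) ^ 2

open scoped Matrix.Norms.L2Operator

namespace Matrix

variable {m n : Type*} [Fintype m] [Fintype n] [DecidableEq n]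

noncomputable def householder (v : n → ℝ) : Matrix n n ℝ :=
  1 - (2 / (v ⬝ᵥ v)) • vecMulVec v v

lemma householder_mem_orthogonalGroup {v : n → ℝ} (hv : v ≠ 0) :
    householder v ∈ orthogonalGroup n ℝ := by
  have hvv : v ⬝ᵥ v ≠ 0 := fun h => hv (dotProduct_self_eq_zero.mp h)
  have hcoeff : 2 / (v ⬝ᵥ v) - 2 / (v ⬝ᵥ v) * (2 / (v ⬝ᵥ v) * (v ⬝ᵥ v)) = -(2 / (v ⬝ᵥ v)) := by
    field_simp; ring
  rw [mem_orthogonalGroup_iff', householder]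
  simp only [transpose_sub, transpose_one, transpose_smul, transpose_vecMulVec, sub_mul, mul_sub,
    one_mul, mul_one, Matrix.smul_mul, Matrix.mul_smul, vecMulVec_mul_vecMulVec, vecMulVec_smul,
    smul_smul, ← sub_smul, hcoeff, neg_smul, sub_neg_eq_add, sub_add_cancel]

lemma householder_mulVec (v w : n → ℝ) :
    householder v *ᵥ w = w - (2 / (v ⬝ᵥ v) * (v ⬝ᵥ w)) • v := by
  rw [householder, sub_mulVec, one_mulVec, smul_mulVec, vecMulVec_mulVec, op_smul_eq_smul,
    smul_smul]

lemma trace_mul_householder (C : Matrix n n ℝ) (v : n → ℝ) :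
    trace (C * householder v) = trace C - 2 / (v ⬝ᵥ v) * (v ⬝ᵥ C *ᵥ v) := by
  rw [householder, mul_sub, mul_one, Matrix.mul_smul, trace_sub, trace_smul, mul_vecMulVec,
    trace_vecMulVec, dotProduct_comm (C *ᵥ v), smul_eq_mul]

/-- The product of these two reflections is a rotation in the `(i, j)`-plane, through the angle
whose half-tangent is `t`. -/
lemma trace_mul_householder_mul_householder (C : Matrix n n ℝ) {i j : n} (hij : i ≠ j) (t : ℝ) :
    trace (C * (householder (Pi.single i 1) * householder (Pi.single i 1 + t • Pi.single j 1))) =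
      trace C - 2 / (1 + t ^ 2) * ((C i i + C j j) * t ^ 2 + (C i j - C j i) * t) := by
  rw [← Matrix.mul_assoc, trace_mul_householder, trace_mul_householder, ← mulVec_mulVec,
    householder_mulVec]
  simp only [dotProduct_single, Pi.single_eq_same, mul_one, div_one, mulVec_single,
    MulOpposite.op_one, one_smul, single_dotProduct, col_apply, one_mul, dotProduct_add,
    Pi.add_apply, Pi.smul_apply, ne_eq, hij, not_false_eq_true, Pi.single_eq_of_ne, smul_eq_mul,
    mul_zero, add_zero, dotProduct_smul, hij.symm, zero_add, mulVec_sub, mulVec_add, mulVec_smul,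
    dotProduct_sub, add_dotProduct, smul_dotProduct]
  field_simp
  ring

section TraceMaximizer

variable {C : Matrix n n ℝ} (hC : ∀ Q ∈ orthogonalGroup n ℝ, trace (C * Q) ≤ trace C)
include hC

lemma isHermitian_of_forall_trace_mul_le : C.IsHermitian := by
  refine IsHermitian.ext fun i j => ?_
  rcases eq_or_ne i j with rfl | hij
  · rfl
  have hQ (t : ℝ) : householder (Pi.single i 1) * householder (Pi.single i 1 + t • Pi.single j 1)
      ∈ orthogonalGroup n ℝ := by
    refine Submonoid.mul_mem _ (householder_mem_orthogonalGroup ?_)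
      (householder_mem_orthogonalGroup ?_) <;>
    exact fun h => by simpa [hij.symm] using congr_fun h i
  have hquad (t : ℝ) : 0 ≤ (C i i + C j j) * (t * t) + (C i j - C j i) * t + 0 := by
    have h := hC _ (hQ t)
    rw [trace_mul_householder_mul_householder C hij] at h
    rw [add_zero, ← sq]
    exact nonneg_of_mul_nonneg_right (a := 2 / (1 + t ^ 2)) (by linarith) (by positivity)
  have hdiscrim := discrim_le_zero hquad
  rw [discrim, mul_zero, sub_zero] at hdiscrim
  rw [star_trivial]
  nlinarith [sq_nonneg (C i j - C j i)]

theorem posSemidef_of_forall_trace_mul_le : C.PosSemidef := by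
  refine .of_dotProduct_mulVec_nonneg (isHermitian_of_forall_trace_mul_le hC) fun v => ?_
  rcases eq_or_ne v 0 with rfl | hv
  · simp
  have hvv : 0 < v ⬝ᵥ v := by simpa using dotProduct_self_star_pos_iff.mpr hv
  have h := hC _ (householder_mem_orthogonalGroup hv)
  rw [trace_mul_householder] at h
  rw [star_trivial]
  exact nonneg_of_mul_nonneg_right (a := 2 / (v ⬝ᵥ v)) (by linarith) (by positivity)

end TraceMaximizer

lemma l2_opNorm_le_one_of_conjTranspose_mul_self_eq_one {𝕜 : Type*} [RCLike 𝕜]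
    {A : Matrix m n 𝕜} (hA : Aᴴ * A = 1) : ‖A‖ ≤ 1 := by
  have h1 : ‖(1 : Matrix n n 𝕜)‖ ≤ 1 := by
    rw [cstar_norm_def, map_one]
    exact ContinuousLinearMap.norm_id_le
  have := l2_opNorm_conjTranspose_mul_self A
  rw [hA] at this
  nlinarith [norm_nonneg A]

lemma IsHermitian.l2_opNorm_one_sub_le {A : Matrix n n ℝ} (hA : A.IsHermitian) {c : ℝ}
    (hc : 0 ≤ c) (h : ∀ i, |1 - hA.eigenvalues i| ≤ c) : ‖1 - A‖ ≤ c := by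
  set U := hA.eigenvectorUnitary
  conv_lhs => rw [hA.spectral_theorem, ← map_one (Unitary.conjStarAlgAut ℝ _ U), ← map_sub,
    Unitary.conjStarAlgAut_apply, ← Unitary.coe_star, CStarRing.norm_mul_coe_unitary,
    CStarRing.norm_coe_unitary_mul, ← diagonal_one, diagonal_sub, l2_opNorm_diagonal]
  exact (pi_norm_le_iff_of_nonneg hc).2 fun i => by simpa using h i

omit [DecidableEq n] in
lemma _root_.EuclideanSpace.real_norm_sq_eq_dotProduct (x : EuclideanSpace ℝ n) :
    ‖x‖ ^ 2 = x.ofLp ⬝ᵥ x.ofLp := by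
  rw [← real_inner_self_eq_norm_sq, EuclideanSpace.inner_eq_star_dotProduct, star_trivial]

lemma PosSemidef.abs_one_sub_eigenvalues_le {A : Matrix n n ℝ} {D : Matrix m n ℝ}
    (hA : A.PosSemidef) (hD : 1 - A * A = Dᵀ * D) (i : n) :
    |1 - hA.1.eigenvalues i| ≤ ‖D‖ ^ 2 := by
  set μ := hA.1.eigenvalues i
  set v := hA.1.eigenvectorBasis i
  have hv : ‖v‖ = 1 := hA.1.eigenvectorBasis.orthonormal.1 i
  have hAv : A *ᵥ v.ofLp = μ • v.ofLp := hA.1.mulVec_eigenvectorBasis i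
  have hDv : ‖WithLp.toLp 2 (D *ᵥ v.ofLp)‖ ^ 2 = 1 - μ ^ 2 := by
    rw [EuclideanSpace.real_norm_sq_eq_dotProduct, dotProduct_mulVec, vecMul_mulVec,
      ← mulVec_transpose, transpose_mul, transpose_transpose, ← hD, sub_mulVec, one_mulVec,
      ← mulVec_mulVec, hAv, mulVec_smul, hAv, smul_smul, sub_dotProduct, smul_dotProduct,
      ← EuclideanSpace.real_norm_sq_eq_dotProduct, hv, smul_eq_mul]
    ring
  have hDle : ‖WithLp.toLp 2 (D *ᵥ v.ofLp)‖ ≤ ‖D‖ := by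
    simpa [hv] using D.l2_opNorm_mulVec v
  have hμ : 0 ≤ μ := hA.eigenvalues_nonneg i
  rw [abs_le]
  constructor <;> nlinarith [norm_nonneg (WithLp.toLp 2 (D *ᵥ v.ofLp))]

theorem PosSemidef.l2_opNorm_one_sub_le {A : Matrix n n ℝ} {D : Matrix m n ℝ}
    (hA : A.PosSemidef) (hD : 1 - A * A = Dᵀ * D) : ‖1 - A‖ ≤ ‖D‖ ^ 2 :=
  hA.1.l2_opNorm_one_sub_le (sq_nonneg _) (hA.abs_one_sub_eigenvalues_le hD)

lemma one_sub_transpose_mul_self_eq_transpose_mul_self {k R : Type*} [Fintype k] [DecidableEq k]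
    [CommRing R] {U V : Matrix m k R} (hU : Uᵀ * U = 1) (hV : Vᵀ * V = 1) :
    1 - (Uᵀ * V)ᵀ * (Uᵀ * V) = ((V * Vᵀ - U * Uᵀ) * V)ᵀ * ((V * Vᵀ - U * Uᵀ) * V) := by
  have hU' (X : Matrix k k R) : Uᵀ * (U * X) = X := by rw [← Matrix.mul_assoc, hU, Matrix.one_mul]
  have hD : (V * Vᵀ - U * Uᵀ) * V = V - U * (Uᵀ * V) := by
    rw [Matrix.sub_mul, Matrix.mul_assoc, hV, Matrix.mul_one, Matrix.mul_assoc]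
  simp only [hD, transpose_sub, transpose_mul, transpose_transpose, Matrix.sub_mul, Matrix.mul_sub,
    Matrix.mul_assoc, hU', hV]
  abel

end Matrix

lemma frobSq_eq_trace {a b : ℕ} (X : Matrix (Fin a) (Fin b) ℝ) : frobSq X = trace (Xᵀ * X) := by
  simp only [frobSq, trace, diag, mul_apply, transpose_apply, sq]
  exact Finset.sum_comm

lemma frobSq_sub_of_mem_orthogonalGroup {k : ℕ} (X : Matrix (Fin k) (Fin k) ℝ)
    {W : Matrix (Fin k) (Fin k) ℝ} (hW : W ∈ orthogonalGroup (Fin k) ℝ) :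
    frobSq (X - W) = frobSq X + k - 2 * trace (Xᵀ * W) := by
  have hWX : trace (Wᵀ * X) = trace (Xᵀ * W) := by
    rw [← trace_transpose, transpose_mul, transpose_transpose]
  rw [frobSq_eq_trace, frobSq_eq_trace, transpose_sub, sub_mul, mul_sub, mul_sub,
    (mem_orthogonalGroup_iff' _ _).1 hW, trace_sub, trace_sub, trace_sub, hWX, trace_one,
    Fintype.card_fin]
  ring

/-- `Mᵀ W` is the positive factor of the polar decomposition `M = W (Mᵀ W)`. -/
theorem posSemidef_transpose_mul_of_frobSq_sub_le {k : ℕ} {M W : Matrix (Fin k) (Fin k) ℝ}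
    (hW : W ∈ orthogonalGroup (Fin k) ℝ)
    (hmin : ∀ Q ∈ orthogonalGroup (Fin k) ℝ, frobSq (M - W) ≤ frobSq (M - Q)) :
    (Mᵀ * W).PosSemidef := by
  refine posSemidef_of_forall_trace_mul_le fun Q hQ => ?_
  have := hmin (W * Q) (Submonoid.mul_mem _ hW hQ)
  rw [frobSq_sub_of_mem_orthogonalGroup M hW,
    frobSq_sub_of_mem_orthogonalGroup M (Submonoid.mul_mem _ hW hQ), ← Matrix.mul_assoc] at this
  linarith

/-- For `U, Û` with orthonormal columns and `W_U` the orthogonal polar factor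
of `Uᵀ Û` (the orthogonal matrix minimizing the Frobenius distance to `Uᵀ Û`), one has
`‖Uᵀ Û − W_U‖_op ≤ ‖Û Ûᵀ − U Uᵀ‖_op²`. -/
theorem polar_factor_alignment_bound
    (n k : ℕ) (U Uhat : Matrix (Fin n) (Fin k) ℝ)
    (hU : Uᵀ * U = 1) (hUhat : Uhatᵀ * Uhat = 1)
    (WU : Matrix (Fin k) (Fin k) ℝ)
    (hWUorth : WU * WUᵀ = 1 ∧ WUᵀ * WU = 1)
    (hWUmin : ∀ W : Matrix (Fin k) (Fin k) ℝ, W * Wᵀ = 1 ∧ Wᵀ * W = 1 →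
      frobSq (Uᵀ * Uhat - WU) ≤ frobSq (Uᵀ * Uhat - W)) :
    opNorm (Uᵀ * Uhat - WU) ≤ opNorm (Uhat * Uhatᵀ - U * Uᵀ) ^ 2 := by
  set M := Uᵀ * Uhat
  set C := Mᵀ * WU
  have hC : C.PosSemidef :=
    posSemidef_transpose_mul_of_frobSq_sub_le ((mem_orthogonalGroup_iff _ _).2 hWUorth.1)
      fun Q hQ =>
        hWUmin Q ⟨(mem_orthogonalGroup_iff _ _).1 hQ, (mem_orthogonalGroup_iff' _ _).1 hQ⟩
  have hCt : Cᵀ = C := by simpa [conjTranspose_eq_transpose_of_trivial] using hC.1.eq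
  have hM : M = WU * C := by
    rw [← hCt, transpose_mul, transpose_transpose, ← Matrix.mul_assoc, hWUorth.1, Matrix.one_mul]
  have hMM : Mᵀ * M = C * C := by
    rw [hM, transpose_mul, hCt, Matrix.mul_assoc, ← Matrix.mul_assoc WUᵀ, hWUorth.2, Matrix.one_mul]
  have hCC := one_sub_transpose_mul_self_eq_transpose_mul_self hU hUhat
  rw [hMM] at hCC
  have hUhat1 : ‖Uhat‖ ≤ 1 :=
    l2_opNorm_le_one_of_conjTranspose_mul_self_eq_one
      (by rwa [conjTranspose_eq_transpose_of_trivial])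
  have hWU1 : ‖WU‖ ≤ 1 :=
    l2_opNorm_le_one_of_conjTranspose_mul_self_eq_one
      (by rw [conjTranspose_eq_transpose_of_trivial]; exact hWUorth.2)
  calc opNorm (M - WU) = ‖WU * (C - 1)‖ := by rw [Matrix.mul_sub, Matrix.mul_one, ← hM]; rfl
    _ ≤ ‖C - 1‖ := (l2_opNorm_mul _ _).trans (mul_le_of_le_one_left (norm_nonneg _) hWU1)
    _ = ‖1 - C‖ := norm_sub_rev _ _
    _ ≤ ‖(Uhat * Uhatᵀ - U * Uᵀ) * Uhat‖ ^ 2 := hC.l2_opNorm_one_sub_le hCC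
    _ ≤ opNorm (Uhat * Uhatᵀ - U * Uᵀ) ^ 2 := by
      gcongr
      exact (l2_opNorm_mul _ _).trans (mul_le_of_le_one_right (norm_nonneg _) hUhat1)
end

section
/- Consider the two-block undirected stochastic blockmodel with connectivity matrix B = [[a, b],[b, a]] where 0 < b < a < 1, membership probability vector π = (π_1, 1−π_1) with 0 < π_1 < 1, and dense regime ρ_∞ = 1. Then the asymptotic covariance matrix from Theorem 1 for block ℓ = 1, namely Σ_1 = {diag(π)^{-1/2} T_B^{-1} J Δ_X^{-1}} · E_ξ[g_1(ξ, T_B e_1)] · {Δ_X^{-1} J (T_B^{-1})^T diag(π)^{-1/2}}, is the symmetric 2×2 matrix with entries Σ_1[1,1] = (a^3(1−a)(1−π_1) + b^3(1−b)π_1) / ((a^2−b^2)^2 π_1^2 (1−π_1)), Σ_1[1,2] = Σ_1[2,1] = −ab(a(1−a) + (a−b)(a+b−1)π_1) / ((a^2−b^2)^2 (π_1(1−π_1))^{3/2}), and Σ_1[2,2] = (a^2 b π_1 + a b^2(1−a−π_1)) / ((a^2−b^2)^2 π_1 (1−π_1)^2). -/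
/-!
With `ξᵢ = T_B eᵢ`, both `Δ_X = T_B diag(π) T_Bᵀ` and `E g₁(ξ, ξ₁) = T_B diag(πᵢ cᵢ) T_Bᵀ` are
congruences by `T_B`, where `cᵢ = B₁ᵢ (1 - B₁ᵢ)` because `ξ₁ᵀ ξᵢ = (T_Bᵀ T_B)₁ᵢ = B₁ᵢ`. All factors
`T_B` then cancel against `T_B⁻¹`, leaving
`Σ₁ = diag(π)^{-1/2} B⁻¹ diag(cᵢ / πᵢ) B⁻¹ diag(π)^{-1/2}`, an explicit product of `2 × 2` matrices.
-/

open Matrix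

/-- `g_1(ξ, x) = (xᵀ J ξ)(1 − xᵀ J ξ) ξ ξᵀ` with `J = I₂` (dense regime `ρ_∞ = 1`). -/
noncomputable def gOne (ξ x : Fin 2 → ℝ) : Matrix (Fin 2) (Fin 2) ℝ :=
  ((x ⬝ᵥ ξ) * (1 - x ⬝ᵥ ξ)) • Matrix.vecMulVec ξ ξ

namespace Matrix

variable {ι R K : Type*} [Fintype ι]

theorem mulVec_dotProduct_mulVec [CommSemiring R] (T : Matrix ι ι R) (u v : ι → R) :
    (T *ᵥ u) ⬝ᵥ (T *ᵥ v) = u ⬝ᵥ (Tᵀ * T) *ᵥ v := by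
  rw [← mulVec_mulVec, dotProduct_mulVec u, vecMul_transpose]

variable [DecidableEq ι]

theorem sum_smul_vecMulVec_mulVec_single [CommSemiring R] (T : Matrix ι ι R) (w : ι → R) :
    ∑ i, w i • vecMulVec (T *ᵥ Pi.single i 1) (T *ᵥ Pi.single i 1) = T * diagonal w * Tᵀ := by
  ext j k
  rw [mul_apply]
  simp [Matrix.sum_apply, vecMulVec_apply, mul_diagonal, mul_comm, mul_left_comm]

theorem smul_vecMulVec_add_smul_vecMulVec_fin_two [CommSemiring R] (T : Matrix (Fin 2) (Fin 2) R)
    (w₀ w₁ : R) :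
    w₀ • vecMulVec (T *ᵥ ![1, 0]) (T *ᵥ ![1, 0]) + w₁ • vecMulVec (T *ᵥ ![0, 1]) (T *ᵥ ![0, 1])
      = T * diagonal ![w₀, w₁] * Tᵀ := by
  have h₀ : (![1, 0] : Fin 2 → R) = Pi.single 0 1 := by ext i; fin_cases i <;> rfl
  have h₁ : (![0, 1] : Fin 2 → R) = Pi.single 1 1 := by ext i; fin_cases i <;> rfl
  rw [h₀, h₁, ← sum_smul_vecMulVec_mulVec_single, Fin.sum_univ_two]
  rfl

theorem sandwich_congr_eq_gram_inv_sandwich [CommRing R] (T D M : Matrix ι ι R)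
    (hT : IsUnit T.det) :
    T⁻¹ * (T * D * Tᵀ)⁻¹ * (T * M * Tᵀ) * ((T * D * Tᵀ)⁻¹ * T⁻¹ᵀ)
      = (Tᵀ * T)⁻¹ * (D⁻¹ * M * D⁻¹) * (Tᵀ * T)⁻¹ := by
  have hTt : IsUnit Tᵀ.det := by rwa [det_transpose]
  simp only [mul_inv_rev, transpose_nonsing_inv, Matrix.mul_assoc,
    nonsing_inv_mul_cancel_left _ _ hT, mul_nonsing_inv_cancel_left _ _ hTt]

theorem inv_diagonal_mul_diagonal_mul_inv_diagonal [Field K] (w c : ι → K) (hw : ∀ i, w i ≠ 0) :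
    (diagonal w)⁻¹ * diagonal (w * c) * (diagonal w)⁻¹ = diagonal (c / w) := by
  have hinv : (diagonal w)⁻¹ = diagonal w⁻¹ :=
    inv_eq_left_inv (by rw [diagonal_mul_diagonal, ← diagonal_one]; congr 1; ext i; simp [hw])
  rw [hinv, diagonal_mul_diagonal, diagonal_mul_diagonal]
  congr 1; ext i
  simp only [Pi.mul_apply, Pi.inv_apply, Pi.div_apply]
  field_simp [hw i]

theorem inv_fin_two_symm [Field K] (a b : K) (h : a ^ 2 - b ^ 2 ≠ 0) :
    !![a, b; b, a]⁻¹ = (a ^ 2 - b ^ 2)⁻¹ • !![a, -b; -b, a] := by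
  refine inv_eq_left_inv ?_
  ext i j
  fin_cases i <;> fin_cases j <;> simp [mul_apply, Fin.sum_univ_two] <;> field_simp <;> ring

end Matrix

theorem Real.rpow_three_halves {x : ℝ} (hx : 0 ≤ x) : x ^ ((3 : ℝ) / 2) = x * √x := by
  rw [show (3 : ℝ) / 2 = 1 + 1 / 2 by norm_num, Real.rpow_add' hx (by norm_num), Real.rpow_one,
    Real.sqrt_eq_rpow]

theorem gram_two_block_factor {a b : ℝ} (h₁ : 0 ≤ a + b) (h₂ : 0 ≤ a - b) :
    (diagonal ![√(a + b), √(a - b)] * ((√2)⁻¹ • !![(1 : ℝ), 1; 1, -1])ᵀ)ᵀ *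
      (diagonal ![√(a + b), √(a - b)] * ((√2)⁻¹ • !![(1 : ℝ), 1; 1, -1])ᵀ) = !![a, b; b, a] := by
  ext i j
  fin_cases i <;> fin_cases j <;> simp only [mul_apply, Fin.sum_univ_two, transpose_apply] <;>
    simp <;> ring_nf <;> simp [h₁, h₂] <;> ring

theorem inv_sqrt_diagonal_conj_two_block_eq {a b π₁ : ℝ} (hb : 0 < b) (hba : b < a)
    (hπ₁ : 0 < π₁) (hπ₁' : π₁ < 1) :
    diagonal ![(√π₁)⁻¹, (√(1 - π₁))⁻¹] *
        (!![a, b; b, a]⁻¹ * diagonal (![a * (1 - a), b * (1 - b)] / ![π₁, 1 - π₁]) *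
          !![a, b; b, a]⁻¹) *
        diagonal ![(√π₁)⁻¹, (√(1 - π₁))⁻¹]
      = !![(a ^ 3 * (1 - a) * (1 - π₁) + b ^ 3 * (1 - b) * π₁) /
              ((a ^ 2 - b ^ 2) ^ 2 * π₁ ^ 2 * (1 - π₁)),
            -(a * b * (a * (1 - a) + (a - b) * (a + b - 1) * π₁)) /
              ((a ^ 2 - b ^ 2) ^ 2 * (π₁ * (1 - π₁)) ^ ((3 : ℝ) / 2));
            -(a * b * (a * (1 - a) + (a - b) * (a + b - 1) * π₁)) /
              ((a ^ 2 - b ^ 2) ^ 2 * (π₁ * (1 - π₁)) ^ ((3 : ℝ) / 2)),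
            (a ^ 2 * b * π₁ + a * b ^ 2 * (1 - a - π₁)) /
              ((a ^ 2 - b ^ 2) ^ 2 * π₁ * (1 - π₁) ^ 2)] := by
  have hab : a ^ 2 - b ^ 2 ≠ 0 := by nlinarith
  have hπ₂ : 0 < 1 - π₁ := by linarith
  have hsq₁ := Real.sq_sqrt hπ₁.le
  have hsq₂ := Real.sq_sqrt hπ₂.le
  have hpos₁ := Real.sqrt_pos.2 hπ₁
  have hpos₂ := Real.sqrt_pos.2 hπ₂
  rw [inv_fin_two_symm a b hab, Real.rpow_three_halves (by positivity), Real.sqrt_mul hπ₁.le]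
  simp only [diagonal_fin_two, smul_of, Pi.div_apply]
  ext i j
  fin_cases i <;> fin_cases j <;> simp <;> field_simp <;> (try simp only [hsq₁, hsq₂]) <;> ring

theorem block_one_covariance_closed_form_general
    (a b π₁ : ℝ) (hb : 0 < b) (hba : b < a)
    (hπ₁ : 0 < π₁) (hπ₁' : π₁ < 1) :
    let UB : Matrix (Fin 2) (Fin 2) ℝ := (Real.sqrt 2)⁻¹ • !![1, 1; 1, -1]
    let TB : Matrix (Fin 2) (Fin 2) ℝ :=
      Matrix.diagonal ![Real.sqrt (a + b), Real.sqrt (a - b)] * UBᵀ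
    let J : Matrix (Fin 2) (Fin 2) ℝ := 1
    let ξ₁ : Fin 2 → ℝ := TB.mulVec ![1, 0]
    let ξ₂ : Fin 2 → ℝ := TB.mulVec ![0, 1]
    let ΔX : Matrix (Fin 2) (Fin 2) ℝ :=
      π₁ • Matrix.vecMulVec ξ₁ ξ₁ + (1 - π₁) • Matrix.vecMulVec ξ₂ ξ₂
    let Eg : (Fin 2 → ℝ) → Matrix (Fin 2) (Fin 2) ℝ := fun x =>
      π₁ • gOne ξ₁ x + (1 - π₁) • gOne ξ₂ x
    let Dπ : Matrix (Fin 2) (Fin 2) ℝ :=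
      Matrix.diagonal ![(Real.sqrt π₁)⁻¹, (Real.sqrt (1 - π₁))⁻¹]
    let Sig1 : Matrix (Fin 2) (Fin 2) ℝ :=
      (Dπ * TB⁻¹ * J * ΔX⁻¹) * Eg ξ₁ * (ΔX⁻¹ * J * (TB⁻¹)ᵀ * Dπ)
    Sig1 = !![(a ^ 3 * (1 - a) * (1 - π₁) + b ^ 3 * (1 - b) * π₁) /
              ((a ^ 2 - b ^ 2) ^ 2 * π₁ ^ 2 * (1 - π₁)),
            -(a * b * (a * (1 - a) + (a - b) * (a + b - 1) * π₁)) /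
              ((a ^ 2 - b ^ 2) ^ 2 * (π₁ * (1 - π₁)) ^ ((3 : ℝ) / 2));
            -(a * b * (a * (1 - a) + (a - b) * (a + b - 1) * π₁)) /
              ((a ^ 2 - b ^ 2) ^ 2 * (π₁ * (1 - π₁)) ^ ((3 : ℝ) / 2)),
            (a ^ 2 * b * π₁ + a * b ^ 2 * (1 - a - π₁)) /
              ((a ^ 2 - b ^ 2) ^ 2 * π₁ * (1 - π₁) ^ 2)] := by
  intro UB TB J ξ₁ ξ₂ ΔX Eg Dπ Sig1
  have hG : TBᵀ * TB = !![a, b; b, a] := gram_two_block_factor (by linarith) (by linarith)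
  have hT : IsUnit TB.det := by
    have hB : IsUnit (TBᵀ * TB).det := by
      rw [hG, det_fin_two_of]; exact Ne.isUnit (by nlinarith)
    rw [det_mul, det_transpose] at hB
    exact isUnit_of_mul_isUnit_left hB
  have hΔX : ΔX = TB * diagonal ![π₁, 1 - π₁] * TBᵀ :=
    smul_vecMulVec_add_smul_vecMulVec_fin_two TB π₁ (1 - π₁)
  have hEg : Eg ξ₁ = TB * diagonal (![π₁, 1 - π₁] * ![a * (1 - a), b * (1 - b)]) * TBᵀ := by
    have h₁₁ : ξ₁ ⬝ᵥ ξ₁ = a := by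
      rw [show ξ₁ = TB *ᵥ ![1, 0] from rfl, mulVec_dotProduct_mulVec, hG]; simp [vecHead, vecTail]
    have h₁₂ : ξ₁ ⬝ᵥ ξ₂ = b := by
      rw [show ξ₂ = TB *ᵥ ![0, 1] from rfl, mulVec_dotProduct_mulVec, hG]; simp [vecHead, vecTail]
    simp only [Eg, gOne, h₁₁, h₁₂, smul_smul]
    rw [smul_vecMulVec_add_smul_vecMulVec_fin_two]
    congr 2; ext i; fin_cases i <;> rfl
  calc Sig1 = Dπ * (TB⁻¹ * ΔX⁻¹ * Eg ξ₁ * (ΔX⁻¹ * TB⁻¹ᵀ)) * Dπ := by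
        simp only [Sig1, J, Matrix.mul_one, Matrix.mul_assoc]
    _ = Dπ * (!![a, b; b, a]⁻¹ * diagonal (![a * (1 - a), b * (1 - b)] / ![π₁, 1 - π₁]) *
          !![a, b; b, a]⁻¹) * Dπ := by
        rw [hΔX, hEg, sandwich_congr_eq_gram_inv_sandwich _ _ _ hT, hG,
          inv_diagonal_mul_diagonal_mul_inv_diagonal]
        intro i; fin_cases i <;> simp <;> linarith
    _ = _ := inv_sqrt_diagonal_conj_two_block_eq hb hba hπ₁ hπ₁'

/-- In the two-block undirected stochastic blockmodel with
`B = [[a,b],[b,a]]`, `0 < b < a < 1`, membership probabilities `(π₁, 1−π₁)`, and dense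
regime `ρ_∞ = 1`, the asymptotic covariance matrix of Theorem 1 for block `ℓ = 1` has the
stated closed form. -/
theorem block_one_covariance_closed_form
    (a b π₁ : ℝ) (hb : 0 < b) (hba : b < a) (ha : a < 1)
    (hπ₁ : 0 < π₁) (hπ₁' : π₁ < 1) :
    let UB : Matrix (Fin 2) (Fin 2) ℝ := (Real.sqrt 2)⁻¹ • !![1, 1; 1, -1]
    let TB : Matrix (Fin 2) (Fin 2) ℝ :=
      Matrix.diagonal ![Real.sqrt (a + b), Real.sqrt (a - b)] * UBᵀ
    let J : Matrix (Fin 2) (Fin 2) ℝ := 1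
    let ξ₁ : Fin 2 → ℝ := TB.mulVec ![1, 0]
    let ξ₂ : Fin 2 → ℝ := TB.mulVec ![0, 1]
    let ΔX : Matrix (Fin 2) (Fin 2) ℝ :=
      π₁ • Matrix.vecMulVec ξ₁ ξ₁ + (1 - π₁) • Matrix.vecMulVec ξ₂ ξ₂
    let Eg : (Fin 2 → ℝ) → Matrix (Fin 2) (Fin 2) ℝ := fun x =>
      π₁ • gOne ξ₁ x + (1 - π₁) • gOne ξ₂ x
    let Dπ : Matrix (Fin 2) (Fin 2) ℝ :=
      Matrix.diagonal ![(Real.sqrt π₁)⁻¹, (Real.sqrt (1 - π₁))⁻¹]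
    let Sig1 : Matrix (Fin 2) (Fin 2) ℝ :=
      (Dπ * TB⁻¹ * J * ΔX⁻¹) * Eg ξ₁ * (ΔX⁻¹ * J * (TB⁻¹)ᵀ * Dπ)
    Sig1 = !![(a ^ 3 * (1 - a) * (1 - π₁) + b ^ 3 * (1 - b) * π₁) /
              ((a ^ 2 - b ^ 2) ^ 2 * π₁ ^ 2 * (1 - π₁)),
            -(a * b * (a * (1 - a) + (a - b) * (a + b - 1) * π₁)) /
              ((a ^ 2 - b ^ 2) ^ 2 * (π₁ * (1 - π₁)) ^ ((3 : ℝ) / 2));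
            -(a * b * (a * (1 - a) + (a - b) * (a + b - 1) * π₁)) /
              ((a ^ 2 - b ^ 2) ^ 2 * (π₁ * (1 - π₁)) ^ ((3 : ℝ) / 2)),
            (a ^ 2 * b * π₁ + a * b ^ 2 * (1 - a - π₁)) /
              ((a ^ 2 - b ^ 2) ^ 2 * π₁ * (1 - π₁) ^ 2)] :=
  block_one_covariance_closed_form_general a b π₁ hb hba hπ₁ hπ₁'
end

section
/- Let 0 < b < a < 1 and 0 < π_1 < 1, and let Σ_1 and Σ_2 be the symmetric 2×2 matrices defined entrywise by: Σ_1[1,1] = (a^3(1−a)(1−π_1)+b^3(1−b)π_1)/((a^2−b^2)^2 π_1^2(1−π_1)), Σ_1[1,2] = −ab(a(1−a)+(a−b)(a+b−1)π_1)/((a^2−b^2)^2(π_1(1−π_1))^{3/2}), Σ_1[2,2] = (a^2 b π_1 + a b^2(1−a−π_1))/((a^2−b^2)^2 π_1(1−π_1)^2); and Σ_2[1,1] = (a b^2 π_1 + a^2 b(1−b−π_1))/((a^2−b^2)^2 π_1^2(1−π_1)), Σ_2[1,2] = −ab(b(1−b)+(a−b)(1−a−b)π_1)/((a^2−b^2)^2(π_1(1−π_1))^{3/2}),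 Σ_2[2,2] = (a^3(1−a)π_1 + b^3(1−b)(1−π_1))/((a^2−b^2)^2 π_1(1−π_1)^2). Then det(Σ_1) = det(Σ_2) = a(1−a)·b(1−b) / ((a^2−b^2)^2 · π_1^2 (1−π_1)^2). -/
/-!
Both matrices have the shape `!![s / (D p² q), -m / (D (p q)^(3/2)); ⋯, u / (D p q²)]` with
`D = (a² - b²)²`, `p = π₁`, `q = 1 - π₁`. Since `((p q)^(3/2))² = (p q)³`, the products of the
diagonal and of the off-diagonal entries share the denominator `D² (p q)³`, so the determinant is
`(s u - m²) / (D² (p q)³)`; in both cases the numerator factors as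
`a(1-a) b(1-b) · D · p q`, which gives the common value.
-/

open Matrix

theorem Real.rpow_three_halves_sq {x : ℝ} (hx : 0 ≤ x) : (x ^ ((3 : ℝ) / 2)) ^ 2 = x ^ 3 := by
  rw [← Real.rpow_mul_natCast hx]
  norm_num

theorem det_covariance_form {D p q s m u : ℝ} (hp : 0 < p) (hq : 0 < q) (hD : D ≠ 0) :
    !![s / (D * p ^ 2 * q), -m / (D * (p * q) ^ ((3 : ℝ) / 2));
      -m / (D * (p * q) ^ ((3 : ℝ) / 2)), u / (D * p * q ^ 2)].det
      = (s * u - m ^ 2) / (D ^ 2 * (p * q) ^ 3) := by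
  have hpq : 0 < p * q := mul_pos hp hq
  rw [det_fin_two_of, div_mul_div_comm, div_mul_div_comm, ← pow_two, ← pow_two, mul_pow,
    Real.rpow_three_halves_sq hpq.le]
  field_simp

theorem det_covariance_form_eq {D p q s m u k : ℝ} (hp : 0 < p) (hq : 0 < q) (hD : D ≠ 0)
    (hnum : s * u - m ^ 2 = k * D * (p * q)) :
    !![s / (D * p ^ 2 * q), -m / (D * (p * q) ^ ((3 : ℝ) / 2));
      -m / (D * (p * q) ^ ((3 : ℝ) / 2)), u / (D * p * q ^ 2)].det
      = k / (D * (p ^ 2 * q ^ 2)) := by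
  rw [det_covariance_form hp hq hD, hnum]
  field_simp

theorem generalized_variances_equal_general
    (a b π₁ : ℝ) (hb : 0 < b) (hba : b < a)
    (hπ₁ : 0 < π₁) (hπ₁' : π₁ < 1) :
    let Sig1 : Matrix (Fin 2) (Fin 2) ℝ :=
      !![(a ^ 3 * (1 - a) * (1 - π₁) + b ^ 3 * (1 - b) * π₁) /
           ((a ^ 2 - b ^ 2) ^ 2 * π₁ ^ 2 * (1 - π₁)),
         -(a * b * (a * (1 - a) + (a - b) * (a + b - 1) * π₁)) /
           ((a ^ 2 - b ^ 2) ^ 2 * (π₁ * (1 - π₁)) ^ ((3 : ℝ) / 2));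
         -(a * b * (a * (1 - a) + (a - b) * (a + b - 1) * π₁)) /
           ((a ^ 2 - b ^ 2) ^ 2 * (π₁ * (1 - π₁)) ^ ((3 : ℝ) / 2)),
         (a ^ 2 * b * π₁ + a * b ^ 2 * (1 - a - π₁)) /
           ((a ^ 2 - b ^ 2) ^ 2 * π₁ * (1 - π₁) ^ 2)]
    let Sig2 : Matrix (Fin 2) (Fin 2) ℝ :=
      !![(a * b ^ 2 * π₁ + a ^ 2 * b * (1 - b - π₁)) /
           ((a ^ 2 - b ^ 2) ^ 2 * π₁ ^ 2 * (1 - π₁)),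
         -(a * b * (b * (1 - b) + (a - b) * (1 - a - b) * π₁)) /
           ((a ^ 2 - b ^ 2) ^ 2 * (π₁ * (1 - π₁)) ^ ((3 : ℝ) / 2));
         -(a * b * (b * (1 - b) + (a - b) * (1 - a - b) * π₁)) /
           ((a ^ 2 - b ^ 2) ^ 2 * (π₁ * (1 - π₁)) ^ ((3 : ℝ) / 2)),
         (a ^ 3 * (1 - a) * π₁ + b ^ 3 * (1 - b) * (1 - π₁)) /
           ((a ^ 2 - b ^ 2) ^ 2 * π₁ * (1 - π₁) ^ 2)]
    Sig1.det = a * (1 - a) * (b * (1 - b)) /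
        ((a ^ 2 - b ^ 2) ^ 2 * (π₁ ^ 2 * (1 - π₁) ^ 2)) ∧
    Sig2.det = a * (1 - a) * (b * (1 - b)) /
        ((a ^ 2 - b ^ 2) ^ 2 * (π₁ ^ 2 * (1 - π₁) ^ 2)) := by
  intro Sig1 Sig2
  have hq : 0 < 1 - π₁ := sub_pos.2 hπ₁'
  have hD : (a ^ 2 - b ^ 2) ^ 2 ≠ 0 := pow_ne_zero _ (by nlinarith)
  exact ⟨det_covariance_form_eq hπ₁ hq hD (by ring), det_covariance_form_eq hπ₁ hq hD (by ring)⟩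

/-- The two block-specific asymptotic covariance matrices of the
three-parameter two-block stochastic blockmodel have equal determinants, given by
`a(1−a)·b(1−b)/((a²−b²)²·π₁²(1−π₁)²)`. -/
theorem generalized_variances_equal
    (a b π₁ : ℝ) (hb : 0 < b) (hba : b < a) (ha : a < 1)
    (hπ₁ : 0 < π₁) (hπ₁' : π₁ < 1) :
    let Sig1 : Matrix (Fin 2) (Fin 2) ℝ :=
      !![(a ^ 3 * (1 - a) * (1 - π₁) + b ^ 3 * (1 - b) * π₁) /
           ((a ^ 2 - b ^ 2) ^ 2 * π₁ ^ 2 * (1 - π₁)),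
         -(a * b * (a * (1 - a) + (a - b) * (a + b - 1) * π₁)) /
           ((a ^ 2 - b ^ 2) ^ 2 * (π₁ * (1 - π₁)) ^ ((3 : ℝ) / 2));
         -(a * b * (a * (1 - a) + (a - b) * (a + b - 1) * π₁)) /
           ((a ^ 2 - b ^ 2) ^ 2 * (π₁ * (1 - π₁)) ^ ((3 : ℝ) / 2)),
         (a ^ 2 * b * π₁ + a * b ^ 2 * (1 - a - π₁)) /
           ((a ^ 2 - b ^ 2) ^ 2 * π₁ * (1 - π₁) ^ 2)]
    let Sig2 : Matrix (Fin 2) (Fin 2) ℝ :=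
      !![(a * b ^ 2 * π₁ + a ^ 2 * b * (1 - b - π₁)) /
           ((a ^ 2 - b ^ 2) ^ 2 * π₁ ^ 2 * (1 - π₁)),
         -(a * b * (b * (1 - b) + (a - b) * (1 - a - b) * π₁)) /
           ((a ^ 2 - b ^ 2) ^ 2 * (π₁ * (1 - π₁)) ^ ((3 : ℝ) / 2));
         -(a * b * (b * (1 - b) + (a - b) * (1 - a - b) * π₁)) /
           ((a ^ 2 - b ^ 2) ^ 2 * (π₁ * (1 - π₁)) ^ ((3 : ℝ) / 2)),
         (a ^ 3 * (1 - a) * π₁ + b ^ 3 * (1 - b) * (1 - π₁)) /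
           ((a ^ 2 - b ^ 2) ^ 2 * π₁ * (1 - π₁) ^ 2)]
    Sig1.det = a * (1 - a) * (b * (1 - b)) /
        ((a ^ 2 - b ^ 2) ^ 2 * (π₁ ^ 2 * (1 - π₁) ^ 2)) ∧
    Sig2.det = a * (1 - a) * (b * (1 - b)) /
        ((a ^ 2 - b ^ 2) ^ 2 * (π₁ ^ 2 * (1 - π₁) ^ 2)) :=
  generalized_variances_equal_general a b π₁ hb hba hπ₁ hπ₁'
end
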